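/- arXiv:2110.09161 — 2 statements merged into one kernel-verified Lean document; each statement's English description precedes it below -/
import Mathlib

section
/- Let the instance be proper of degree d: n ≥ m, n divisible by 8, the number k of large jobs (jobs of size exceeding OPT/(100·m^{1/4})) satisfies m − m^{3/4}/50 < k < m, and d = ⌈log₂(m−k)⌉. Let r = ⌈(m−2^d)/8 − √m/2⌉ and j = ⌊k − 8√m − 2^d⌋, and assume r ≥ 1 and j ≥ 1. Draw a permutation σ of {1,…,n} uniformly at random and let P↑ be the r-th largest job size among the first n/8 jobs of the order J^σ. Then P_σ[ P_j ≥ P↑ ≥ P_k ] ≥ 1/3, where P_i denotes the i-th largest job size of the whole instance. -/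
open Finset

noncomputable section

/-- Load of machine `M` under schedule `f` (job `i` has size `p i`). -/
def mcLoad {n m : ℕ} (p : Fin n → ℝ) (f : Fin n → Fin m) (M : Fin m) : ℝ :=
  ∑ i ∈ Finset.univ.filter (fun i => f i = M), p i

/-- Minimum load of a schedule. -/
def minLoad {n m : ℕ} (p : Fin n → ℝ) (f : Fin n → Fin m) : ℝ :=
  ⨅ M : Fin m, mcLoad p f M

/-- The optimal (offline) minimum load of the instance. -/
def OPT {n : ℕ} (m : ℕ) (p : Fin n → ℝ) : ℝ :=
  ⨆ f : Fin n → Fin m, minLoad p f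

/-- The `i`-th largest job size (1-indexed), with `nthLargest p i = 0` for `i > n`. -/
def nthLargest {n : ℕ} (p : Fin n → ℝ) (i : ℕ) : ℝ :=
  ((List.ofFn p).mergeSort (fun a b => decide (b ≤ a))).getD (i - 1) 0

/-- `P↑`: the `r`-th largest job size among the first `n/8` jobs of the order `σ`
(the job arriving at position `a` is `σ a`). -/
def PupOf {n : ℕ} (p : Fin n → ℝ) (r : ℕ) (σ : Equiv.Perm (Fin n)) : ℝ :=
  nthLargest (fun a : Fin (n / 8) => p (σ (Fin.castLE (Nat.div_le_self n 8) a))) r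

end

/-!
Let `X_C σ` be the number of jobs of a set `C` among the first `s = n/8` arrivals. Under a uniform
permutation `X_C` is hypergeometric, with mean `|C|/8` and variance
`7 |C| (n - |C|) / (64 (n - 1)) ≤ 7m/64` when `|C| ≤ m`. If the sample holds at least `r` of the
`k` largest jobs, then `P↑ ≥ P_k`; if it holds fewer than `r` of the `j - 1` or fewer jobs larger
than `P_j`, then `P↑ ≤ P_j`. The choice of `r` and `j` puts `r` at distance at least `√m/2` from
the means of both counts, so by Cantelli's inequality each failure has probability at most
`(7/64) / (7/64 + 1/4) = 7/23`, and `1 - 14/23 ≥ 1/3`.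
-/

open Equiv Function
open scoped Nat

theorem List.Pairwise.getElem_iff_lt_countP_of_monotone {α : Type*} [Preorder α] {l : List α}
    (hl : l.Pairwise (· ≥ ·)) {P : α → Prop} [DecidablePred P] (hP : Monotone P) {i : ℕ}
    (hi : i < l.length) : P l[i] ↔ i < l.countP (P ·) := by
  have hsplit := hl
  rw [← List.take_append_drop i l, ← List.getElem_cons_drop hi, List.pairwise_append,
    List.pairwise_cons] at hsplit
  obtain ⟨-, ⟨hbelow, -⟩, habove⟩ := hsplit
  have hcount : l.countP (P ·)
      = (l.take i).countP (P ·) + (l[i] :: l.drop (i + 1)).countP (P ·) := by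
    rw [List.getElem_cons_drop, ← List.countP_append, List.take_append_drop]
  have hlen : (l.take i).length = i := List.length_take_of_le hi.le
  rw [hcount, List.countP_cons]
  by_cases hPi : P l[i]
  · have htake : (l.take i).countP (P ·) = (l.take i).length := List.countP_eq_length.2
      fun a ha => decide_eq_true (hP (habove a ha _ List.mem_cons_self) hPi)
    simp only [hPi, decide_true, if_true, true_iff]
    omega
  · have hdrop : (l.drop (i + 1)).countP (P ·) = 0 := List.countP_eq_zero.2
      fun b hb hPb => hPi (hP (hbelow b hb) (of_decide_eq_true hPb))
    have htake : (l.take i).countP (P ·) ≤ (l.take i).length := List.countP_le_length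
    simp only [hPi, decide_false, Bool.false_eq_true, if_false, false_iff, not_lt]
    omega

theorem Monotone.apply_nthLargest_iff {P : ℝ → Prop} [DecidablePred P] (hP : Monotone P)
    {N : ℕ} (q : Fin N → ℝ) {r : ℕ} (hr₁ : 1 ≤ r) (hrN : r ≤ N) :
    P (nthLargest q r) ↔ r ≤ #{i | P (q i)} := by
  set L := (List.ofFn q).mergeSort (fun a b => decide (b ≤ a))
  have hsorted : L.Pairwise (· ≥ ·) := by
    simpa using List.pairwise_mergeSort (le := fun a b : ℝ => decide (b ≤ a))
      (fun a b c hab hbc => by simp only [decide_eq_true_eq] at *; linarith)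
      (fun a b => by simpa using le_total b a) (List.ofFn q)
  have hlen : r - 1 < L.length := by
    rw [List.length_mergeSort, List.length_ofFn]
    omega
  have hcount : L.countP (P ·) = #{i | P (q i)} := by
    rw [(List.mergeSort_perm _ _).countP_eq, ← Multiset.coe_countP, ← Fin.univ_val_map,
      Multiset.countP_map]
    rfl
  rw [nthLargest, List.getD_eq_getElem _ _ hlen,
    hsorted.getElem_iff_lt_countP_of_monotone hP hlen, hcount]
  omega

theorem le_nthLargest_iff {N : ℕ} (q : Fin N → ℝ) {r : ℕ} (hr₁ : 1 ≤ r) (hrN : r ≤ N) {x : ℝ} :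
    x ≤ nthLargest q r ↔ r ≤ #{i | x ≤ q i} :=
  Monotone.apply_nthLargest_iff (fun _ _ hab h => h.trans hab) q hr₁ hrN

theorem lt_nthLargest_iff {N : ℕ} (q : Fin N → ℝ) {r : ℕ} (hr₁ : 1 ≤ r) (hrN : r ≤ N) {x : ℝ} :
    x < nthLargest q r ↔ r ≤ #{i | x < q i} :=
  Monotone.apply_nthLargest_iff (fun _ _ hab h => h.trans_le hab) q hr₁ hrN

-- Cantelli's inequality, in counting form.
theorem card_mul_sq_add_le_of_sum_eq_zero {ι : Type*} [Fintype ι] {Y : ι → ℝ}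
    (hY : ∑ i, Y i = 0) {v : ℝ} (hv : ∑ i, Y i ^ 2 ≤ Fintype.card ι * v) {t : ℝ} (ht : 0 < t)
    {B : Finset ι} (hB : ∀ i ∈ B, t ≤ Y i) :
    #B * (t ^ 2 + v) ≤ Fintype.card ι * v := by
  have hNv : 0 ≤ Fintype.card ι * v := (sum_nonneg fun i _ => sq_nonneg (Y i)).trans hv
  rcases le_or_gt (t ^ 2 + v) 0 with hneg | hpos
  · nlinarith [(#B).cast_nonneg (α := ℝ)]
  -- `c = v / t` minimises `(v + c²) / (t + c)²`.
  set c := v / t with hc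
  have htc : t + c = (t ^ 2 + v) / t := by rw [hc]; field_simp
  have hshift : ∑ i, (Y i + c) ^ 2 ≤ Fintype.card ι * (v + c ^ 2) := by
    simp only [add_sq, sum_add_distrib, ← sum_mul, ← mul_sum, hY, sum_const, Finset.card_univ,
      nsmul_eq_mul]
    linarith
  have hB' : #B * (t + c) ^ 2 ≤ ∑ i, (Y i + c) ^ 2 :=
    calc #B * (t + c) ^ 2 = ∑ i ∈ B, (t + c) ^ 2 := by rw [sum_const, nsmul_eq_mul]
      _ ≤ ∑ i ∈ B, (Y i + c) ^ 2 := sum_le_sum fun i hi =>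
          pow_le_pow_left₀ (by rw [htc]; positivity) (by linarith [hB i hi]) 2
      _ ≤ ∑ i, (Y i + c) ^ 2 :=
          sum_le_sum_of_subset_of_nonneg (subset_univ B) fun _ _ _ => sq_nonneg _
  have hscaled : #B * (t ^ 2 + v) * ((t ^ 2 + v) / t ^ 2)
      ≤ Fintype.card ι * v * ((t ^ 2 + v) / t ^ 2) := by
    have e1 : (t + c) ^ 2 = (t ^ 2 + v) * ((t ^ 2 + v) / t ^ 2) := by rw [htc]; field_simp
    have e2 : v + c ^ 2 = v * ((t ^ 2 + v) / t ^ 2) := by rw [hc]; field_simp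
    rw [e1, ← mul_assoc] at hB'
    rw [e2, ← mul_assoc] at hshift
    linarith
  exact le_of_mul_le_mul_right hscaled (by positivity)

theorem exists_perm_apply_eq_and_apply_eq {α : Type*} [DecidableEq α] {a b a' b' : α}
    (hab : a ≠ b) (hab' : a' ≠ b') : ∃ τ : Perm α, τ a = a' ∧ τ b = b' := by
  have hb : swap a a' b ≠ a' := fun h =>
    hab ((swap_apply_eq_iff.1 h).trans (swap_apply_right a a')).symm
  exact ⟨swap (swap a a' b) b' * swap a a', by simp [swap_apply_of_ne_of_ne hb.symm hab'],
    by simp⟩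

theorem card_mul_div_card_eq_div_eight {α β : Type*} [Fintype α] [Fintype β] [Nonempty β]
    (hn : Fintype.card α = 8 * Fintype.card β) (x : ℝ) :
    Fintype.card β * x / Fintype.card α = x / 8 := by
  have : (Fintype.card β : ℝ) ≠ 0 := by exact_mod_cast Fintype.card_ne_zero
  rw [hn]
  push_cast
  field_simp

section RandomPermutation

variable {α : Type*} [Fintype α] [DecidableEq α]

theorem card_mul_card_perm_apply_mem (a : α) (C : Finset α) :
    Fintype.card α * #{σ : Perm α | σ a ∈ C} = (Fintype.card α)! * #C := by
  have hconst (a' : α) : #{σ : Perm α | σ a' ∈ C} = #{σ : Perm α | σ a ∈ C} :=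
    card_equiv (Equiv.mulRight (swap a a')) (by simp)
  have hfiber (σ : Perm α) : #{a' | σ a' ∈ C} = #C := card_equiv σ (by simp)
  have hdouble : ∑ a', #{σ : Perm α | σ a' ∈ C} = ∑ σ : Perm α, #{a' | σ a' ∈ C} := by
    simp only [card_filter]
    exact sum_comm
  simpa [hconst, hfiber, Fintype.card_perm] using hdouble

theorem descFactorial_two_mul_card_perm_apply_mem_and_apply_mem {a b : α} (hab : a ≠ b)
    (C : Finset α) :
    (Fintype.card α).descFactorial 2 * #{σ : Perm α | σ a ∈ C ∧ σ b ∈ C}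
      = (Fintype.card α)! * (#C).descFactorial 2 := by
  have hconst : ∀ x ∈ (univ : Finset α).offDiag,
      #{σ : Perm α | σ x.1 ∈ C ∧ σ x.2 ∈ C} = #{σ : Perm α | σ a ∈ C ∧ σ b ∈ C} := by
    intro x hx
    obtain ⟨τ, hτa, hτb⟩ := exists_perm_apply_eq_and_apply_eq hab (mem_offDiag.1 hx).2.2
    exact card_equiv (Equiv.mulRight τ) (by simp [hτa, hτb])
  have hfiber (σ : Perm α) :
      #{x ∈ (univ : Finset α).offDiag | σ x.1 ∈ C ∧ σ x.2 ∈ C} = #C.offDiag :=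
    card_equiv (σ.prodCongr σ) (by simp; tauto)
  have hdouble : ∑ x ∈ (univ : Finset α).offDiag, #{σ : Perm α | σ x.1 ∈ C ∧ σ x.2 ∈ C}
      = ∑ σ : Perm α, #{x ∈ (univ : Finset α).offDiag | σ x.1 ∈ C ∧ σ x.2 ∈ C} := by
    simp only [card_filter]
    exact sum_comm
  rw [sum_congr rfl hconst] at hdouble
  simp only [hfiber, sum_const, offDiag_card, Finset.card_univ, Fintype.card_perm,
    smul_eq_mul] at hdouble
  have hdesc (x : ℕ) : x.descFactorial 2 = x * x - x := by
    rw [Nat.descFactorial_succ, Nat.descFactorial_one, Nat.mul_comm, Nat.mul_sub_one]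
  rw [hdesc, hdesc, hdouble]

variable {β : Type*} [Fintype β]

def sampleCount (ι : β → α) (C : Finset α) (σ : Perm α) : ℕ := #{b | σ (ι b) ∈ C}

theorem sum_sampleCount (ι : β → α) (C : Finset α) :
    ∑ σ, (sampleCount ι C σ : ℝ)
      = (Fintype.card α)! * (Fintype.card β * #C / Fintype.card α) := by
  have hterm (b : β) :
      (#{σ : Perm α | σ (ι b) ∈ C} : ℝ) = (Fintype.card α)! * #C / Fintype.card α := by
    have : Nonempty α := ⟨ι b⟩
    rw [eq_div_iff (by positivity), mul_comm]
    exact_mod_cast card_mul_card_perm_apply_mem (ι b) C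
  calc ∑ σ, (sampleCount ι C σ : ℝ) = ∑ b, (#{σ : Perm α | σ (ι b) ∈ C} : ℝ) := by
        simp only [sampleCount, natCast_card_filter]
        exact sum_comm
    _ = _ := by
        simp only [hterm, sum_const, Finset.card_univ, nsmul_eq_mul]
        ring

theorem sum_sampleCount_sq {ι : β → α} (hι : Injective ι) (C : Finset α) :
    ∑ σ, (sampleCount ι C σ : ℝ) ^ 2
      = (Fintype.card α)! * (Fintype.card β * #C / Fintype.card α
        + Fintype.card β * (Fintype.card β - 1) * (#C * (#C - 1))
          / (Fintype.card α * (Fintype.card α - 1))) := by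
  classical
  have hsingle (b : β) :
      (#{σ : Perm α | σ (ι b) ∈ C ∧ σ (ι b) ∈ C} : ℝ)
        = (Fintype.card α)! * #C / Fintype.card α := by
    have : Nonempty α := ⟨ι b⟩
    rw [eq_div_iff (by positivity), mul_comm]
    simp only [and_self]
    exact_mod_cast card_mul_card_perm_apply_mem (ι b) C
  have hpair {b b' : β} (hbb : b ≠ b') :
      (#{σ : Perm α | σ (ι b) ∈ C ∧ σ (ι b') ∈ C} : ℝ)
        = (Fintype.card α)! * (#C * (#C - 1)) / (Fintype.card α * (Fintype.card α - 1)) := by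
    have h := descFactorial_two_mul_card_perm_apply_mem_and_apply_mem (hι.ne hbb) C
    have hpos : 0 < (Fintype.card α).descFactorial 2 := Nat.descFactorial_pos.2
      ((Finset.card_le_univ {ι b, ι b'}).trans_eq' (card_pair (hι.ne hbb)))
    rw [← Nat.cast_descFactorial_two, ← Nat.cast_descFactorial_two, eq_div_iff (by positivity),
      mul_comm]
    exact_mod_cast h
  have hrow (b : β) : ∑ b', (#{σ : Perm α | σ (ι b) ∈ C ∧ σ (ι b') ∈ C} : ℝ)
      = (Fintype.card α)! * #C / Fintype.card α + (Fintype.card β - 1) *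
        ((Fintype.card α)! * (#C * (#C - 1)) / (Fintype.card α * (Fintype.card α - 1))) := by
    rw [Fintype.sum_eq_add_sum_compl b, hsingle,
      sum_congr rfl fun b' hb' => hpair (Ne.symm (mem_compl.1 hb' ∘ mem_singleton.2)),
      sum_const, card_compl, card_singleton, nsmul_eq_mul,
      Nat.cast_sub (Fintype.card_pos_iff.2 ⟨b⟩), Nat.cast_one]
  calc ∑ σ, (sampleCount ι C σ : ℝ) ^ 2
      = ∑ b, ∑ b', (#{σ : Perm α | σ (ι b) ∈ C ∧ σ (ι b') ∈ C} : ℝ) := by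
        simp only [sampleCount, natCast_card_filter, sq, sum_mul_sum, ite_zero_mul_ite_zero,
          mul_one]
        rw [sum_comm]
        exact sum_congr rfl fun b _ => sum_comm
    _ = _ := by
        simp only [hrow, sum_const, Finset.card_univ, nsmul_eq_mul]
        ring

theorem sum_sq_sampleCount_sub_mean {ι : β → α} (hι : Injective ι)
    (hα : 1 < Fintype.card α) (C : Finset α) :
    ∑ σ, ((sampleCount ι C σ : ℝ) - Fintype.card β * #C / Fintype.card α) ^ 2
      = (Fintype.card α)! * (Fintype.card β * #C * (Fintype.card α - #C)
        * (Fintype.card α - Fintype.card β) / (Fintype.card α ^ 2 * (Fintype.card α - 1))) := by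
  have hn : (Fintype.card α : ℝ) - 1 ≠ 0 := (sub_pos.2 (by exact_mod_cast hα)).ne'
  simp only [sub_sq, sum_add_distrib, sum_sub_distrib, ← sum_mul, ← mul_sum, sum_const,
    Finset.card_univ, Fintype.card_perm, nsmul_eq_mul, sum_sampleCount, sum_sampleCount_sq hι]
  field_simp
  ring

theorem sum_sq_sampleCount_sub_le {ι : β → α} (hι : Injective ι) [Nonempty β]
    (hn : Fintype.card α = 8 * Fintype.card β) {C : Finset α} {m : ℕ} (hC : #C ≤ m) :
    ∑ σ, ((sampleCount ι C σ : ℝ) - #C / 8) ^ 2 ≤ (Fintype.card α)! * (7 * (m : ℝ) / 64) := by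
  have hs₀ : 0 < Fintype.card β := Fintype.card_pos
  have hs : (1 : ℝ) ≤ Fintype.card β := by exact_mod_cast hs₀
  have hCm : (#C : ℝ) ≤ m := by exact_mod_cast hC
  have hCint : (#C : ℝ) * (1 - #C) ≤ 0 := by
    rcases Nat.eq_zero_or_pos #C with h | h
    · simp [h]
    · exact mul_nonpos_of_nonneg_of_nonpos (by positivity) (by simp [Nat.one_le_cast.2 h])
  rw [← card_mul_div_card_eq_div_eight hn, sum_sq_sampleCount_sub_mean hι (by omega) C]
  refine mul_le_mul_of_nonneg_left ?_ (by positivity)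
  push_cast [hn]
  have hn₁ : (0 : ℝ) < 8 * Fintype.card β - 1 := by linarith
  have hkey : (#C : ℝ) * (8 * Fintype.card β - #C) ≤ m * (8 * Fintype.card β - 1) := by
    nlinarith [mul_le_mul_of_nonneg_right hCm hn₁.le]
  rw [div_le_iff₀ (by positivity)]
  nlinarith [mul_le_mul_of_nonneg_left hkey (by positivity : (0 : ℝ) ≤ 7 * Fintype.card β ^ 2)]

theorem twentyThree_mul_card_le_of_sampleCount_deviation [Nonempty β] {ι : β → α}
    (hι : Injective ι) (hn : Fintype.card α = 8 * Fintype.card β) {C : Finset α} {m : ℕ} (hm : 0 < m)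
    (hC : #C ≤ m) {ε : ℝ} (hε : ε ^ 2 = 1) {B : Finset (Perm α)}
    (hB : ∀ σ ∈ B, √m / 2 ≤ ε * ((sampleCount ι C σ : ℝ) - #C / 8)) :
    23 * #B ≤ 7 * Fintype.card (Perm α) := by
  have hsum : ∑ σ, ε * ((sampleCount ι C σ : ℝ) - #C / 8) = 0 := by
    rw [← mul_sum, sum_sub_distrib, sum_sampleCount, card_mul_div_card_eq_div_eight hn,
      sum_const, Finset.card_univ, Fintype.card_perm, nsmul_eq_mul, sub_self, mul_zero]
  have hvar : ∑ σ, (ε * ((sampleCount ι C σ : ℝ) - #C / 8)) ^ 2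
      ≤ Fintype.card (Perm α) * (7 * (m : ℝ) / 64) := by
    simpa only [mul_pow, hε, one_mul, Fintype.card_perm] using sum_sq_sampleCount_sub_le hι hn hC
  -- With variance `7m/64` and `t² = m/4`, Cantelli's bound is `7/23`.
  have h := card_mul_sq_add_le_of_sum_eq_zero hsum hvar (t := √m / 2) (by positivity) hB
  rw [div_pow, Real.sq_sqrt (Nat.cast_nonneg m)] at h
  have hm' : (0 : ℝ) < m := by exact_mod_cast hm
  have : (23 * #B : ℝ) ≤ 7 * Fintype.card (Perm α) := by nlinarith
  exact_mod_cast this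

theorem twentyThree_mul_card_sampleCount_lt_le [Nonempty β] {ι : β → α} (hι : Injective ι)
    (hn : Fintype.card α = 8 * Fintype.card β) {C : Finset α} {m : ℕ} (hm : 0 < m)
    (hC : #C ≤ m) {r : ℕ} (hr : √m / 2 ≤ #C / 8 - ((r : ℝ) - 1)) :
    23 * #{σ : Perm α | sampleCount ι C σ < r} ≤ 7 * Fintype.card (Perm α) := by
  refine twentyThree_mul_card_le_of_sampleCount_deviation hι hn hm hC (ε := -1) (by norm_num)
    fun σ hσ => ?_
  have : (sampleCount ι C σ : ℝ) + 1 ≤ r := by exact_mod_cast (mem_filter.1 hσ).2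
  linarith

theorem twentyThree_mul_card_le_sampleCount_le [Nonempty β] {ι : β → α} (hι : Injective ι)
    (hn : Fintype.card α = 8 * Fintype.card β) {C : Finset α} {m : ℕ} (hm : 0 < m)
    (hC : #C ≤ m) {r : ℕ} (hr : √m / 2 ≤ r - (#C : ℝ) / 8) :
    23 * #{σ : Perm α | r ≤ sampleCount ι C σ} ≤ 7 * Fintype.card (Perm α) := by
  refine twentyThree_mul_card_le_of_sampleCount_deviation hι hn hm hC (ε := 1) (by norm_num)
    fun σ hσ => ?_
  have : (r : ℝ) ≤ sampleCount ι C σ := by exact_mod_cast (mem_filter.1 hσ).2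
  linarith

end RandomPermutation

theorem nthLargest_mem_Icc_of_sampleCount {s N : ℕ} {ι : Fin s → Fin N} {p : Fin N → ℝ}
    {σ : Perm (Fin N)} {C : Finset (Fin N)} {x y : ℝ} {r : ℕ} (hr : 1 ≤ r)
    (hC : ∀ i ∈ C, x ≤ p i) (hrC : r ≤ sampleCount ι C σ)
    (hry : sampleCount ι {i | y < p i} σ < r) :
    nthLargest (fun a => p (σ (ι a))) r ∈ Set.Icc x y := by
  have hrs : r ≤ s := hrC.trans ((card_le_univ _).trans_eq (Fintype.card_fin s))
  constructor
  · exact (le_nthLargest_iff _ hr hrs).2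
      (hrC.trans (card_le_card fun a ha => by simp_all [sampleCount]))
  · exact not_lt.1 fun h => hry.not_ge (((lt_nthLargest_iff _ hr hrs).1 h).trans_eq
      (by simp [sampleCount]))

theorem card_le_three_mul_card_of_compl_union_subset {γ : Type*} [Fintype γ] [DecidableEq γ]
    {G B₁ B₂ : Finset γ} (hG : (B₁ ∪ B₂)ᶜ ⊆ G) (h₁ : 23 * #B₁ ≤ 7 * Fintype.card γ)
    (h₂ : 23 * #B₂ ≤ 7 * Fintype.card γ) : Fintype.card γ ≤ 3 * #G := by
  have hcompl := card_le_card hG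
  have hunion := card_union_le B₁ B₂
  rw [card_compl] at hcompl
  omega

theorem sqrt_div_two_le_threshold_gaps {m k d r j : ℕ} (hk : k < m) (hd : d = Nat.clog 2 (m - k))
    (hr : (r : ℤ) = ⌈((m : ℝ) - 2 ^ d) / 8 - √m / 2⌉)
    (hj : (j : ℤ) = ⌊(k : ℝ) - 8 * √m - 2 ^ d⌋) :
    √m / 2 ≤ k / 8 - ((r : ℝ) - 1) ∧ √m / 2 ≤ r - ((j : ℝ) - 1) / 8 ∧ j < k := by
  have hkd : (m : ℝ) - 2 ^ d ≤ k := by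
    have h := Nat.le_pow_clog one_lt_two (m - k)
    rw [← hd, ← Nat.cast_le (α := ℝ), Nat.cast_sub hk.le] at h
    push_cast at h
    linarith
  have hr_lt : (r : ℝ) < ((m : ℝ) - 2 ^ d) / 8 - √m / 2 + 1 := by
    have h := Int.ceil_lt_add_one (((m : ℝ) - 2 ^ d) / 8 - √m / 2)
    rw [← hr] at h
    exact_mod_cast h
  have hr_ge : ((m : ℝ) - 2 ^ d) / 8 - √m / 2 ≤ r := by
    have h := Int.le_ceil (((m : ℝ) - 2 ^ d) / 8 - √m / 2)
    rw [← hr] at h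
    exact_mod_cast h
  have hj_le : (j : ℝ) ≤ k - 8 * √m - 2 ^ d := by
    have h := Int.floor_le ((k : ℝ) - 8 * √m - 2 ^ d)
    rw [← hj] at h
    exact_mod_cast h
  have h2d : (1 : ℝ) ≤ 2 ^ d := one_le_pow₀ (by norm_num)
  have hkm : (k : ℝ) ≤ m := by exact_mod_cast hk.le
  refine ⟨by linarith, by linarith [Real.sqrt_nonneg m], ?_⟩
  exact_mod_cast (by linarith [Real.sqrt_nonneg m] : (j : ℝ) < k)

theorem stmt8_general {n m : ℕ} (hnm : m ≤ n) (h8 : 8 ∣ n)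
    (p : Fin n → ℝ)
    (k : ℕ)
    (hk2 : k < m)
    (d : ℕ) (hd : d = Nat.clog 2 (m - k))
    (r : ℕ) (hr : (r : ℤ) = ⌈((m : ℝ) - 2 ^ d) / 8 - Real.sqrt m / 2⌉) (hr1 : 1 ≤ r)
    (j : ℕ) (hj : (j : ℤ) = ⌊(k : ℝ) - 8 * Real.sqrt m - 2 ^ d⌋) (hj1 : 1 ≤ j) :
    Fintype.card (Equiv.Perm (Fin n)) ≤
      3 * ((Finset.univ : Finset (Equiv.Perm (Fin n))).filter (fun σ =>
        nthLargest p k ≤ PupOf p r σ ∧ PupOf p r σ ≤ nthLargest p j)).card := by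
  obtain ⟨hdev₁, hdev₂, hjk⟩ := sqrt_div_two_le_threshold_gaps hk2 hd hr hj
  have : Nonempty (Fin (n / 8)) := ⟨⟨0, by omega⟩⟩
  have hcard : Fintype.card (Fin n) = 8 * Fintype.card (Fin (n / 8)) := by
    simp [Nat.mul_div_cancel' h8]
  set ι : Fin (n / 8) → Fin n := Fin.castLE (Nat.div_le_self n 8)
  have hι : Injective ι := Fin.castLE_injective _
  obtain ⟨C, hCsub, hCk⟩ :=
    exists_subset_card_eq ((le_nthLargest_iff p (by omega) (by omega : k ≤ n)).1 le_rfl)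
  set A : Finset (Fin n) := {i | nthLargest p j < p i}
  have hA : #A < j := not_le.1 fun h => lt_irrefl _ ((lt_nthLargest_iff p hj1 (by omega)).2 h)
  have hAj : (#A : ℝ) ≤ j - 1 := by
    rw [le_sub_iff_add_le]
    exact_mod_cast hA
  refine card_le_three_mul_card_of_compl_union_subset ?_
    (twentyThree_mul_card_sampleCount_lt_le hι hcard (by omega) (hCk.trans_le hk2.le)
      (by rwa [hCk]))
    (twentyThree_mul_card_le_sampleCount_le hι hcard (by omega) (C := A) (m := m) (r := r)
      (by omega) (by linarith))
  intro σ hσ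
  simp only [compl_union, mem_inter, mem_compl, mem_filter, mem_univ, true_and, not_lt,
    not_le] at hσ ⊢
  exact nthLargest_mem_Icc_of_sampleCount hr1 (fun i hi => by simpa using hCsub hi) hσ.1 hσ.2

/-- For a proper instance of degree `d` (with `n ≥ m`, `8 ∣ n`,
`m − m^{3/4}/50 < k < m` large jobs and `d = ⌈log₂(m−k)⌉`), let
`r = ⌈(m−2^d)/8 − √m/2⌉ ≥ 1` and `j = ⌊k − 8√m − 2^d⌋ ≥ 1`. For a uniformly random
permutation `σ`, with `P↑` the `r`-th largest size among the first `n/8` jobs of the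
order, `P_σ[P_j ≥ P↑ ≥ P_k] ≥ 1/3`. -/
theorem stmt8 {n m : ℕ} (hm : 1 ≤ m) (hnm : m ≤ n) (h8 : 8 ∣ n)
    (p : Fin n → ℝ) (hp : ∀ i, 0 ≤ p i)
    (k : ℕ)
    (hk : k = (Finset.univ.filter
      (fun i => OPT m p / (100 * (m : ℝ) ^ ((1 : ℝ) / 4)) < p i)).card)
    (hk1 : (m : ℝ) - (m : ℝ) ^ ((3 : ℝ) / 4) / 50 < k) (hk2 : k < m)
    (d : ℕ) (hd : d = Nat.clog 2 (m - k))
    (r : ℕ) (hr : (r : ℤ) = ⌈((m : ℝ) - 2 ^ d) / 8 - Real.sqrt m / 2⌉) (hr1 : 1 ≤ r)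
    (j : ℕ) (hj : (j : ℤ) = ⌊(k : ℝ) - 8 * Real.sqrt m - 2 ^ d⌋) (hj1 : 1 ≤ j) :
    Fintype.card (Equiv.Perm (Fin n)) ≤
      3 * ((Finset.univ : Finset (Equiv.Perm (Fin n))).filter (fun σ =>
        nthLargest p k ≤ PupOf p r σ ∧ PupOf p r σ ≤ nthLargest p j)).card :=
  stmt8_general hnm h8 p k hk2 d hd r hr hr1 j hj hj1
end

section
/- Fix m ≥ 1 and c ≥ 1. Suppose that for every n ∈ ℕ there is a deterministic online algorithm A[n] for Machine Covering on m machines that knows the input length n and is c-competitive in the adversarial model, i.e., for every job sequence of length n the schedule produced by A[n] has minimum load at least OPT/c. Then there exists a single deterministic online algorithm B that does not know the input length (a function assigning to every finite job-size sequence the machine for its last job) such that for every finite job sequence, the schedule B produces has minimum load at least OPT/c. -/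
open Finset

noncomputable section

/-- Run a deterministic online algorithm `a` (a function mapping each nonempty prefix of
job sizes to the machine receiving the last job of the prefix) on the job sequence `q`:
the job arriving at position `j` is assigned to machine `a (q 0, …, q j)`. -/
def run {m : ℕ} (a : List ℝ → Fin m) {n' : ℕ} (q : Fin n' → ℝ) : Fin n' → Fin m :=
  fun j => a (List.ofFn (fun i : Fin (j.1 + 1) => q (Fin.castLE j.2 i)))

end

lemma mcLoad_castLE {m n N : ℕ} (hn : n ≤ N) (q : Fin n → ℝ) (q' : Fin N → ℝ)
    (hqq : ∀ i : Fin n, q' (Fin.castLE hn i) = q i)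
    (hz : ∀ i : Fin N, ¬ i.1 < n → q' i = 0)
    (g : Fin N → Fin m) (M : Fin m) :
    mcLoad q' g M = mcLoad q (fun i => g (Fin.castLE hn i)) M := by
  unfold mcLoad
  rw [Finset.sum_filter, Finset.sum_filter]
  calc ∑ i : Fin N, (if g i = M then q' i else 0)
      = ∑ i ∈ Finset.univ.map (Fin.castLEEmb hn), (if g i = M then q' i else 0) := by
        refine (Finset.sum_subset (Finset.subset_univ _) ?_).symm
        intro x _ hx
        have hxn : ¬ x.1 < n := by
          intro h
          exact hx (Finset.mem_map.2 ⟨⟨x.1, h⟩, Finset.mem_univ _, Fin.ext rfl⟩)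
        split <;> simp [hz x hxn]
    _ = ∑ i : Fin n, (if g (Fin.castLE hn i) = M then q' (Fin.castLE hn i) else 0) := by
        rw [Finset.sum_map]; rfl
    _ = ∑ i : Fin n, (if g (Fin.castLE hn i) = M then q i else 0) := by
        simp [hqq]

lemma minLoad_castLE {m n N : ℕ} (hn : n ≤ N) (q : Fin n → ℝ) (q' : Fin N → ℝ)
    (hqq : ∀ i : Fin n, q' (Fin.castLE hn i) = q i)
    (hz : ∀ i : Fin N, ¬ i.1 < n → q' i = 0)
    (g : Fin N → Fin m) :
    minLoad q' g = minLoad q (fun i => g (Fin.castLE hn i)) := by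
  unfold minLoad
  exact iInf_congr (fun M => mcLoad_castLE hn q q' hqq hz g M)

lemma ultra_const {α : Type*} [Finite α] [Nonempty α] (U : Ultrafilter ℕ) (f : ℕ → α) :
    ∃ v, {N | f N = v} ∈ U := by
  by_contra h
  push_neg at h
  have h2 : ∀ v : α, {N | f N = v}ᶜ ∈ U := fun v =>
    Ultrafilter.compl_mem_iff_notMem.2 (h v)
  have h3 : (⋂ v : α, {N | f N = v}ᶜ) ∈ U := Filter.iInter_mem.2 h2
  obtain ⟨N, hN⟩ := Filter.nonempty_of_mem h3
  simp only [Set.mem_iInter, Set.mem_compl_iff, Set.mem_setOf_eq] at hN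
  exact hN (f N) rfl

/-- Fix `m ≥ 1` and `c ≥ 1`. Suppose for every `n` there is a deterministic
online algorithm `A n` for Machine Covering on `m` machines, knowing the input length `n`,
that is `c`-competitive in the adversarial model: on every length-`n` job sequence its
schedule has minimum load at least `OPT/c`. Then there is a single deterministic online
algorithm `B` not knowing the input length which on every finite job sequence produces a
schedule of minimum load at least `OPT/c`. -/
theorem stmt19 (m : ℕ) (hm : 1 ≤ m) (c : ℝ) (hc : 1 ≤ c)
    (A : ℕ → List ℝ → Fin m)
    (hA : ∀ (n : ℕ) (q : Fin n → ℝ), (∀ i, 0 ≤ q i) →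
      OPT m q / c ≤ minLoad q (run (A n) q)) :
    ∃ B : List ℝ → Fin m, ∀ (n : ℕ) (q : Fin n → ℝ), (∀ i, 0 ≤ q i) →
      OPT m q / c ≤ minLoad q (run B q) := by
  haveI : NeZero m := ⟨by omega⟩
  set U : Ultrafilter ℕ := Ultrafilter.of Filter.atTop with hU
  have hUle : (U : Filter ℕ) ≤ Filter.atTop := Ultrafilter.of_le _
  have key : ∀ l : List ℝ, ∃ v, {N | A N l = v} ∈ U := fun l =>
    ultra_const U (fun N => A N l)
  choose B hB using key
  refine ⟨B, ?_⟩
  intro n q hq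
  -- the prefix lists
  set L : Fin n → List ℝ :=
    fun j => List.ofFn (fun i : Fin (j.1 + 1) => q (Fin.castLE j.2 i)) with hL
  have hS : ({N | n ≤ N} ∩ ⋂ j : Fin n, {N | A N (L j) = B (L j)}) ∈ U :=
    Filter.inter_mem (hUle (Filter.mem_atTop n)) (Filter.iInter_mem.2 fun j => hB (L j))
  obtain ⟨N, hNn, hNj⟩ := Filter.nonempty_of_mem hS
  simp only [Set.mem_iInter, Set.mem_setOf_eq] at hNn hNj
  -- padded sequence
  set q' : Fin N → ℝ := fun i => if h : i.1 < n then q ⟨i.1, h⟩ else 0 with hq'def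
  have hq' : ∀ i, 0 ≤ q' i := by
    intro i; simp only [hq'def]; split
    · exact hq _
    · exact le_refl 0
  have hqq : ∀ i : Fin n, q' (Fin.castLE hNn i) = q i := by
    intro i; simp only [hq'def, Fin.castLE]; rw [dif_pos i.isLt]
  have hz : ∀ i : Fin N, ¬ i.1 < n → q' i = 0 := by
    intro i hi; simp only [hq'def]; rw [dif_neg hi]
  -- running A N on q' agrees with running B on q
  have hrunpre : ∀ j : Fin n,
      run (A N) q' (Fin.castLE hNn j) = B (L j) := by
    intro j
    have hlist : List.ofFn (fun i : Fin ((Fin.castLE hNn j).1 + 1) =>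
        q' (Fin.castLE (Fin.castLE hNn j).2 i)) = L j := by
      simp only [hL]
      congr 1
      funext i
      have hi : (i : ℕ) < n := lt_of_lt_of_le i.isLt j.2
      simp only [hq'def, Fin.castLE]
      rw [dif_pos hi]
    rw [run, hlist, hNj j]
  have hcomp : (fun i : Fin n => run (A N) q' (Fin.castLE hNn i)) = run B q := by
    funext j
    rw [hrunpre j]
    rfl
  have hML : minLoad q' (run (A N) q') = minLoad q (run B q) := by
    rw [minLoad_castLE hNn q q' hqq hz, hcomp]
  -- OPT only grows under zero padding
  haveI : Nonempty (Fin m) := inferInstance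
  have hOPT : OPT m q ≤ OPT m q' := by
    refine ciSup_le fun f => ?_
    set f' : Fin N → Fin m :=
      fun i => if h : i.1 < n then f ⟨i.1, h⟩ else Classical.arbitrary _ with hf'
    have hfeq : minLoad q f = minLoad q' f' := by
      rw [minLoad_castLE hNn q q' hqq hz f']
      congr 1
      funext i
      simp only [hf', Fin.castLE]
      rw [dif_pos i.isLt]
    rw [hfeq]
    exact le_ciSup (Set.Finite.bddAbove (Set.finite_range _)) f'
  have hc0 : (0:ℝ) < c := lt_of_lt_of_le one_pos hc
  calc OPT m q / c ≤ OPT m q' / c := by gcongr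
    _ ≤ minLoad q' (run (A N) q') := hA N q' hq'
    _ = minLoad q (run B q) := hML
end
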